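/- Let X be a complete CAT(0) space and f, g : X → (−∞, ∞] convex, lsc and proper; set Φ(x,y) = f(x) + g(y) + (1/(2λ))d(x,y)² for a fixed λ > 0. If x* is a fixed point of J_λ^f ∘ J_λ^g and y* = J_λ^g(x*), then (x*, y*) minimizes Φ over X × X. -/

import Mathlib

/-!
With `c = 1 / (2λ)`, the minimizing property of `J = J_λ^f` improves to the resolvent inequality
`f (J x) + c d(J x, x)² + c d(J x, z)² ≤ f z + c d(x, z)²`: testing the minimizing property at
the midpoint of `J x` and `z` turns a coefficient `a` of `d(J x, z)²` into `(1 + a) / 2`, and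
iterating drives it to `1`. Apply this to `J_λ^f` at `y*` (with `J_λ^f y* = x*`) and to `J_λ^g`
at `x*` and add: the cross terms are controlled by the quadrilateral inequality
`d(y*, x)² + d(x*, y)² ≤ d(x*, y*)² + d(x*, x)² + d(x, y)² + d(y, y*)²`, which follows from
the CN inequality at the midpoint of `x*` and `y`, and what remains is `Φ(x*, y*) ≤ Φ(x, y)`.
-/

open Filter Topology Metric Set

/-- A (chosen) geodesic bicombing witnessing that `X` is a geodesic space:
`geo x y t` is the point at parameter fraction `t ∈ [0,1]` on a geodesic from `x` to `y`. -/
structure Geodesic (X : Type*) [MetricSpace X] where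
  geo : X → X → ℝ → X
  geo_zero : ∀ x y, geo x y 0 = x
  geo_one : ∀ x y, geo x y 1 = y
  geo_dist : ∀ x y : X, ∀ s ∈ Set.Icc (0:ℝ) 1, ∀ t ∈ Set.Icc (0:ℝ) 1,
    dist (geo x y s) (geo x y t) = |s - t| * dist x y

/-- The CN (Bruhat–Tits) inequality characterizing CAT(0) among geodesic spaces. -/
def CAT0 (X : Type*) [MetricSpace X] : Prop :=
  ∀ x y z m : X, dist x m = dist x y / 2 → dist y m = dist x y / 2 →
    dist z m ^ 2 ≤ dist z x ^ 2 / 2 + dist z y ^ 2 / 2 - dist x y ^ 2 / 4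

section

variable {X : Type*} [MetricSpace X]

namespace Geodesic

variable (G : Geodesic X)

def IsConvexFun (f : X → EReal) : Prop :=
  ∀ x y : X, ∀ t ∈ Icc (0:ℝ) 1,
    f (G.geo x y t) ≤ ((1 - t : ℝ) : EReal) * f x + ((t : ℝ) : EReal) * f y

theorem dist_geo_half_left (p q : X) : dist p (G.geo p q (1 / 2)) = dist p q / 2 := by
  have h := G.geo_dist p q 0 (by norm_num) (1 / 2) (by norm_num)
  rw [G.geo_zero] at h
  norm_num [h]
  ring

theorem dist_geo_half_right (p q : X) : dist q (G.geo p q (1 / 2)) = dist p q / 2 := by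
  have h := G.geo_dist p q 1 (by norm_num) (1 / 2) (by norm_num)
  rw [G.geo_one] at h
  norm_num [h]
  ring

theorem IsConvexFun.toReal_geo_le {G : Geodesic X} {f : X → EReal} (hf : G.IsConvexFun f)
    (hf_bot : ∀ x, f x ≠ ⊥) {p q : X} (hp : f p ≠ ⊤) (hq : f q ≠ ⊤) {t : ℝ}
    (ht : t ∈ Icc 0 1) :
    f (G.geo p q t) ≠ ⊤ ∧
      (f (G.geo p q t)).toReal ≤ (1 - t) * (f p).toReal + t * (f q).toReal := by
  have h := hf p q t ht
  rw [← EReal.coe_toReal hp (hf_bot p), ← EReal.coe_toReal hq (hf_bot q)] at h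
  rw [← EReal.coe_mul, ← EReal.coe_mul, ← EReal.coe_add] at h
  exact ⟨ne_top_of_le_ne_top (EReal.coe_ne_top _) h,
    (EReal.toReal_le_toReal h (hf_bot _) (EReal.coe_ne_top _)).trans_eq (EReal.toReal_coe _)⟩

end Geodesic

namespace CAT0

theorem dist_sq_geo_half_le (hX : CAT0 X) (G : Geodesic X) (p q z : X) :
    dist z (G.geo p q (1 / 2)) ^ 2 ≤ dist z p ^ 2 / 2 + dist z q ^ 2 / 2 - dist p q ^ 2 / 4 :=
  hX p q z _ (G.dist_geo_half_left p q) (G.dist_geo_half_right p q)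

theorem dist_sq_add_dist_sq_le (hX : CAT0 X) (G : Geodesic X) (p q r s : X) :
    dist p r ^ 2 + dist q s ^ 2 ≤
      dist p q ^ 2 + dist q r ^ 2 + dist r s ^ 2 + dist s p ^ 2 := by
  set m := G.geo q s (1 / 2)
  have hp := hX.dist_sq_geo_half_le G q s p
  have hr := hX.dist_sq_geo_half_le G q s r
  have hpr : dist p r ^ 2 ≤ 2 * (dist p m ^ 2 + dist r m ^ 2) :=
    (pow_le_pow_left₀ dist_nonneg (dist_triangle_right p r m) 2).trans add_sq_le
  rw [dist_comm r q] at hr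
  rw [dist_comm p s] at hp
  linarith

end CAT0

/-- `J` is the resolvent `J_λ^f` with `c = 1 / (2λ)`, given by its minimizing property. -/
def IsResolvent (f : X → EReal) (c : ℝ) (J : X → X) : Prop :=
  ∀ x z : X,
    f (J x) + ((c * dist (J x) x ^ 2 : ℝ) : EReal) ≤ f z + ((c * dist x z ^ 2 : ℝ) : EReal)

namespace IsResolvent

variable {f : X → EReal} {c : ℝ} {J : X → X}

theorem ne_top (hJ : IsResolvent f c J) (x : X) {z : X} (hz : f z ≠ ⊤) : f (J x) ≠ ⊤ := by
  intro h
  have := hJ x z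
  rw [h, EReal.top_add_coe, top_le_iff] at this
  exact (EReal.add_lt_top hz (EReal.coe_ne_top _)).ne this

theorem toReal_le (hJ : IsResolvent f c J) (hf_bot : ∀ x, f x ≠ ⊥) (x : X) {z : X}
    (hz : f z ≠ ⊤) :
    (f (J x)).toReal + c * dist (J x) x ^ 2 ≤ (f z).toReal + c * dist x z ^ 2 := by
  have h := hJ x z
  rw [← EReal.coe_toReal (hJ.ne_top x hz) (hf_bot _), ← EReal.coe_toReal hz (hf_bot _)] at h
  exact_mod_cast h

variable {G : Geodesic X}

theorem toReal_add_one_sub_half_pow_mul_le (hX : CAT0 X) (hf : G.IsConvexFun f)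
    (hf_bot : ∀ x, f x ≠ ⊥) (hc : 0 ≤ c) (hJ : IsResolvent f c J) (n : ℕ) (x : X) {z : X}
    (hz : f z ≠ ⊤) :
    (f (J x)).toReal + c * dist (J x) x ^ 2 + (1 - (1 / 2) ^ n) * (c * dist (J x) z ^ 2) ≤
      (f z).toReal + c * dist x z ^ 2 := by
  -- Testing the inequality with coefficient `a` at the midpoint of `J x` and `z` yields it with
  -- coefficient `(1 + a) / 2`, by convexity of `f` and the CN inequality at `x`.
  induction n generalizing z with
  | zero => simpa using hJ.toReal_le hf_bot x hz
  | succ n ih =>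
    obtain ⟨hm, hfm⟩ := hf.toReal_geo_le hf_bot (hJ.ne_top x hz) hz (t := 1 / 2) (by norm_num)
    have hih := ih hm
    rw [G.dist_geo_half_left] at hih
    have hCN := mul_le_mul_of_nonneg_left (hX.dist_sq_geo_half_le G (J x) z x) hc
    rw [dist_comm x (J x)] at hCN
    rw [pow_succ (1 / 2 : ℝ) n]
    linarith

theorem toReal_add_le (hX : CAT0 X) (hf : G.IsConvexFun f) (hf_bot : ∀ x, f x ≠ ⊥)
    (hc : 0 ≤ c) (hJ : IsResolvent f c J) (x : X) {z : X} (hz : f z ≠ ⊤) :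
    (f (J x)).toReal + c * dist (J x) x ^ 2 + c * dist (J x) z ^ 2 ≤
      (f z).toReal + c * dist x z ^ 2 := by
  have hlim : Tendsto (fun n : ℕ => (f (J x)).toReal + c * dist (J x) x ^ 2 +
      (1 - (1 / 2 : ℝ) ^ n) * (c * dist (J x) z ^ 2)) atTop
      (𝓝 ((f (J x)).toReal + c * dist (J x) x ^ 2 + (1 - 0) * (c * dist (J x) z ^ 2))) :=
    (((tendsto_pow_atTop_nhds_zero_of_lt_one (by norm_num) (by norm_num)).const_sub 1).mul_const
      _).const_add _
  rw [sub_zero, one_mul] at hlim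
  exact le_of_tendsto' hlim fun n => hJ.toReal_add_one_sub_half_pow_mul_le hX hf hf_bot hc n x hz

end IsResolvent

end

theorem fixed_point_minimizes_Phi_general {X : Type*} [MetricSpace X]
    (G : Geodesic X) (hX : CAT0 X)
    (f g : X → EReal)
    (hf_ne_bot : ∀ x, f x ≠ ⊥)
    (hg_ne_bot : ∀ x, g x ≠ ⊥)
    (hf_conv : ∀ x y : X, ∀ t ∈ Set.Icc (0:ℝ) 1,
      f (G.geo x y t) ≤ ((1 - t : ℝ) : EReal) * f x + ((t : ℝ) : EReal) * f y)
    (hg_conv : ∀ x y : X, ∀ t ∈ Set.Icc (0:ℝ) 1,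
      g (G.geo x y t) ≤ ((1 - t : ℝ) : EReal) * g x + ((t : ℝ) : EReal) * g y)
    (lam : ℝ) (hlam : 0 < lam)
    (Jf Jg : X → X)
    (hJf : ∀ x z : X,
      f (Jf x) + ((1 / (2 * lam) * dist (Jf x) x ^ 2 : ℝ) : EReal) ≤
        f z + ((1 / (2 * lam) * dist x z ^ 2 : ℝ) : EReal))
    (hJg : ∀ x z : X,
      g (Jg x) + ((1 / (2 * lam) * dist (Jg x) x ^ 2 : ℝ) : EReal) ≤
        g z + ((1 / (2 * lam) * dist x z ^ 2 : ℝ) : EReal))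
    (xs : X) (hxs : Jf (Jg xs) = xs) (ys : X) (hys : ys = Jg xs) :
    ∀ x y : X,
      f xs + g ys + ((1 / (2 * lam) * dist xs ys ^ 2 : ℝ) : EReal) ≤
        f x + g y + ((1 / (2 * lam) * dist x y ^ 2 : ℝ) : EReal) := by
  intro x y
  rcases eq_or_ne (f x) ⊤ with hfx | hfx
  · rw [hfx, EReal.top_add_of_ne_bot (hg_ne_bot y), EReal.top_add_coe]
    exact le_top
  rcases eq_or_ne (g y) ⊤ with hgy | hgy
  · rw [hgy, EReal.add_top_of_ne_bot (hf_ne_bot x), EReal.top_add_coe]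
    exact le_top
  set c := 1 / (2 * lam)
  have hc : 0 ≤ c := by positivity
  have hJf_ys : Jf ys = xs := hys ▸ hxs
  have hfxs : f xs ≠ ⊤ := hJf_ys ▸ IsResolvent.ne_top hJf ys hfx
  have hgys : g ys ≠ ⊤ := hys ▸ IsResolvent.ne_top hJg xs hgy
  have h_f := IsResolvent.toReal_add_le hX hf_conv hf_ne_bot hc hJf ys hfx
  have h_g := IsResolvent.toReal_add_le hX hg_conv hg_ne_bot hc hJg xs hgy
  rw [hJf_ys] at h_f
  rw [← hys] at h_g
  have hquad := mul_le_mul_of_nonneg_left (hX.dist_sq_add_dist_sq_le G ys xs x y) hc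
  rw [dist_comm ys xs] at h_g hquad
  rw [dist_comm y ys] at hquad
  rw [← EReal.coe_toReal hfxs (hf_ne_bot _), ← EReal.coe_toReal hgys (hg_ne_bot _),
    ← EReal.coe_toReal hfx (hf_ne_bot _), ← EReal.coe_toReal hgy (hg_ne_bot _)]
  exact_mod_cast (by linarith : (f xs).toReal + (g ys).toReal + c * dist xs ys ^ 2 ≤
    (f x).toReal + (g y).toReal + c * dist x y ^ 2)

/-- If `x*` is a fixed point of `J_λ^f ∘ J_λ^g` and `y* = J_λ^g x*`, then `(x*, y*)`
minimizes `Φ(x,y) = f x + g y + (1/(2λ)) d(x,y)²` over `X × X`. -/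
theorem fixed_point_minimizes_Phi {X : Type*} [MetricSpace X] [CompleteSpace X]
    (G : Geodesic X) (hX : CAT0 X)
    (f g : X → EReal)
    (hf_ne_bot : ∀ x, f x ≠ ⊥) (hf_proper : ∃ x, f x ≠ ⊤)
    (hg_ne_bot : ∀ x, g x ≠ ⊥) (hg_proper : ∃ x, g x ≠ ⊤)
    (hf_conv : ∀ x y : X, ∀ t ∈ Set.Icc (0:ℝ) 1,
      f (G.geo x y t) ≤ ((1 - t : ℝ) : EReal) * f x + ((t : ℝ) : EReal) * f y)
    (hg_conv : ∀ x y : X, ∀ t ∈ Set.Icc (0:ℝ) 1,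
      g (G.geo x y t) ≤ ((1 - t : ℝ) : EReal) * g x + ((t : ℝ) : EReal) * g y)
    (hf_lsc : LowerSemicontinuous f) (hg_lsc : LowerSemicontinuous g)
    (lam : ℝ) (hlam : 0 < lam)
    (Jf Jg : X → X)
    (hJf : ∀ x z : X,
      f (Jf x) + ((1 / (2 * lam) * dist (Jf x) x ^ 2 : ℝ) : EReal) ≤
        f z + ((1 / (2 * lam) * dist x z ^ 2 : ℝ) : EReal))
    (hJg : ∀ x z : X,
      g (Jg x) + ((1 / (2 * lam) * dist (Jg x) x ^ 2 : ℝ) : EReal) ≤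
        g z + ((1 / (2 * lam) * dist x z ^ 2 : ℝ) : EReal))
    (xs : X) (hxs : Jf (Jg xs) = xs) (ys : X) (hys : ys = Jg xs) :
    ∀ x y : X,
      f xs + g ys + ((1 / (2 * lam) * dist xs ys ^ 2 : ℝ) : EReal) ≤
        f x + g y + ((1 / (2 * lam) * dist x y ^ 2 : ℝ) : EReal) :=
  fixed_point_minimizes_Phi_general G hX f g hf_ne_bot hg_ne_bot hf_conv hg_conv lam hlam Jf Jg hJf
    hJg xs hxs ys hys
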